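/- arXiv:1511.01025 — 2 statements merged into one kernel-verified Lean document; each statement's English description precedes it below -/
import Mathlib

section
/- A finite simple graph G is a proper color-line graph if and only if the vertex set of G admits a partition into cliques, V(G) = ⋃_{Q ∈ C} Q, such that the graph obtained from G by deleting, for every Q ∈ C, all edges with both endpoints in Q is a line graph. -/
/-!
A partition of the vertices into cliques is the same thing as a vertex colouring `f` whose colour
classes are cliques, and the edges deleted are then exactly the monochromatic pairs. In `CL(H, φ)`
the colouring `φ` itself is such a colouring, and properness of `φ` says precisely that no edge of
the line graph `L(H)` is monochromatic, so deleting the monochromatic pairs leaves `L(H)`.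
Conversely, if `G` minus its monochromatic pairs is `L(H)`, transport `f` to the edges of `H`:
the result is proper since the line-graph edges survived the deletion, and `G` is recovered as
`L(H)` together with all monochromatic pairs, which is `CL(H, f)`.
-/

open SimpleGraph

/-- The color-line graph `CL(H)` of an edge-colored graph `(H, φ)`: vertices are the edges
of `H`, and two distinct edges are adjacent iff they share an endpoint or have equal colors. -/
def colorLineGraph {V C : Type*} (H : SimpleGraph V) (φ : H.edgeSet → C) :
    SimpleGraph H.edgeSet where
  Adj e f := e ≠ f ∧
    ((∃ v, v ∈ (e : Sym2 V) ∧ v ∈ (f : Sym2 V)) ∨ φ e = φ f)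
  symm := by
    refine ⟨?_⟩
    rintro e f ⟨hne, h⟩
    refine ⟨hne.symm, ?_⟩
    rcases h with ⟨v, hv1, hv2⟩ | h
    · exact Or.inl ⟨v, hv2, hv1⟩
    · exact Or.inr h.symm
  loopless := by refine ⟨?_⟩; rintro e ⟨hne, -⟩; exact hne rfl

/-- An edge coloring is proper if distinct edges sharing an endpoint get distinct colors. -/
def IsProperEdgeColoring {V C : Type*} (H : SimpleGraph V) (φ : H.edgeSet → C) : Prop :=
  ∀ e f : H.edgeSet, e ≠ f → (∃ v, v ∈ (e : Sym2 V) ∧ v ∈ (f : Sym2 V)) → φ e ≠ φ f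

/-- `G` is a color-line graph: `G ≅ CL(H)` for some finite edge-colored graph `H`. -/
def IsColorLineGraph {α : Type*} (G : SimpleGraph α) : Prop :=
  ∃ (V C : Type) (_ : Fintype V) (H : SimpleGraph V) (φ : H.edgeSet → C),
    Nonempty (G ≃g colorLineGraph H φ)

/-- `G` is a proper color-line graph: `G ≅ CL(H)` for some finite properly
edge-colored graph `H`. -/
def IsProperColorLineGraph {α : Type*} (G : SimpleGraph α) : Prop :=
  ∃ (V C : Type) (_ : Fintype V) (H : SimpleGraph V) (φ : H.edgeSet → C),
    IsProperEdgeColoring H φ ∧ Nonempty (G ≃g colorLineGraph H φ)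

/-- `G` is a `k`-color-line graph: `G ≅ CL(H)` for some finite graph `H`
edge-colored with at most `k` colors. -/
def IsKColorLineGraph (k : ℕ) {α : Type*} (G : SimpleGraph α) : Prop :=
  ∃ (V : Type) (_ : Fintype V) (H : SimpleGraph V) (φ : H.edgeSet → Fin k),
    Nonempty (G ≃g colorLineGraph H φ)

/-- `G` is a proper `k`-color-line graph: `G ≅ CL(H)` for some finite graph `H`
properly edge-colored with at most `k` colors. -/
def IsProperKColorLineGraph (k : ℕ) {α : Type*} (G : SimpleGraph α) : Prop :=
  ∃ (V : Type) (_ : Fintype V) (H : SimpleGraph V) (φ : H.edgeSet → Fin k),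
    IsProperEdgeColoring H φ ∧ Nonempty (G ≃g colorLineGraph H φ)

/-- `G` is a line graph: `G ≅ L(H)` for some finite graph `H`. -/
def IsLineGraph {α : Type*} (G : SimpleGraph α) : Prop :=
  ∃ (V : Type) (_ : Fintype V) (H : SimpleGraph V), Nonempty (G ≃g H.lineGraph)

def monochromaticPairs {α C : Type*} (f : α → C) : Set (Sym2 α) := {e | (e.map f).IsDiag}

section monochromaticPairs

variable {α β C D : Type*}

@[simp]
lemma mk_mem_monochromaticPairs {f : α → C} {u v : α} :
    s(u, v) ∈ monochromaticPairs f ↔ f u = f v := by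
  simp [monochromaticPairs]

lemma monochromaticPairs_comp (f : β → C) (g : α → β) :
    monochromaticPairs (f ∘ g) = Sym2.map g ⁻¹' monochromaticPairs f := by
  ext e
  simp [monochromaticPairs, Sym2.map_map]

lemma monochromaticPairs_congr {f : α → C} {g : α → D} (h : ∀ u v, f u = f v ↔ g u = g v) :
    monochromaticPairs f = monochromaticPairs g := by
  ext e
  induction e using Sym2.ind with
  | _ u v => simp [h]

lemma monochromaticPairs_preimage_singleton (f : α → C) :
    monochromaticPairs (fun v => f ⁻¹' {f v}) = monochromaticPairs f :=
  monochromaticPairs_congr fun u v =>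
    ⟨fun h => (Set.ext_iff.mp h u).mp rfl, fun h => by rw [h]⟩

end monochromaticPairs

section partition

variable {α : Type*} {𝒞 : Set (Set α)} {part : α → Set α}

lemma setOf_exists_mem_forall_mem_eq_monochromaticPairs
    (hpart : ∀ {v Q}, Q ∈ 𝒞 ∧ v ∈ Q ↔ part v = Q) :
    {e : Sym2 α | ∃ Q ∈ 𝒞, ∀ x ∈ e, x ∈ Q} = monochromaticPairs part := by
  ext e
  induction e using Sym2.ind with
  | _ u v =>
    simp only [Set.mem_ofPred_eq, Sym2.mem_iff, forall_eq_or_imp, forall_eq,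
      mk_mem_monochromaticPairs]
    constructor
    · rintro ⟨Q, hQ, hu, hv⟩
      exact (hpart.mp ⟨hQ, hu⟩).trans (hpart.mp ⟨hQ, hv⟩).symm
    · intro h
      obtain ⟨hQ, hu⟩ := hpart.mpr rfl
      exact ⟨part u, hQ, hu, (hpart.mpr h.symm).2⟩

lemma isClique_preimage_singleton_of_forall_isClique {G : SimpleGraph α}
    (hpart : ∀ {v Q}, Q ∈ 𝒞 ∧ v ∈ Q ↔ part v = Q) (h𝒞 : ∀ Q ∈ 𝒞, G.IsClique Q) (Q : Set α) :
    G.IsClique (part ⁻¹' {Q}) := by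
  intro u hu v hv
  obtain ⟨hQ, huQ⟩ := hpart.mpr hu
  exact h𝒞 Q hQ huQ (hpart.mpr hv).2

lemma mem_range_preimage_singleton_and_mem_iff {C : Type*} (f : α → C) (v : α) (Q : Set α) :
    Q ∈ Set.range (fun w => f ⁻¹' {f w}) ∧ v ∈ Q ↔ f ⁻¹' {f v} = Q := by
  constructor
  · rintro ⟨⟨w, rfl⟩, hv⟩
    rw [Set.mem_preimage, Set.mem_singleton_iff] at hv
    rw [hv]
  · rintro rfl
    exact ⟨⟨v, rfl⟩, rfl⟩

end partition

namespace SimpleGraph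

variable {V W C : Type*}

def Iso.deleteEdges {G : SimpleGraph V} {G' : SimpleGraph W} (ψ : G ≃g G') (s : Set (Sym2 W)) :
    G.deleteEdges (Sym2.map ψ ⁻¹' s) ≃g G'.deleteEdges s where
  toEquiv := ψ.toEquiv
  map_rel_iff' := by simp [ψ.map_adj_iff]

lemma colorLineGraph_adj_iff {H : SimpleGraph V} {φ : H.edgeSet → C} {e e' : H.edgeSet} :
    (colorLineGraph H φ).Adj e e' ↔ H.lineGraph.Adj e e' ∨ e ≠ e' ∧ φ e = φ e' := by
  rw [lineGraph_adj_iff_exists, ← and_or_left]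
  rfl

lemma isProperEdgeColoring_iff {H : SimpleGraph V} {φ : H.edgeSet → C} :
    IsProperEdgeColoring H φ ↔ ∀ e e', H.lineGraph.Adj e e' → φ e ≠ φ e' := by
  simp only [IsProperEdgeColoring, lineGraph_adj_iff_exists, and_imp]

lemma colorLineGraph_deleteEdges_monochromaticPairs {H : SimpleGraph V} {φ : H.edgeSet → C}
    (hφ : IsProperEdgeColoring H φ) :
    (colorLineGraph H φ).deleteEdges (monochromaticPairs φ) = H.lineGraph := by
  ext e e'
  rw [deleteEdges_adj, colorLineGraph_adj_iff, mk_mem_monochromaticPairs]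
  have hproper := isProperEdgeColoring_iff.mp hφ e e'
  tauto

lemma adj_iff_deleteEdges_monochromaticPairs_adj_or {G : SimpleGraph V} {f : V → C}
    (hf : ∀ c, G.IsClique (f ⁻¹' {c})) {u v : V} :
    G.Adj u v ↔ (G.deleteEdges (monochromaticPairs f)).Adj u v ∨ u ≠ v ∧ f u = f v := by
  rw [deleteEdges_adj, mk_mem_monochromaticPairs]
  have hsame : f u = f v → u ≠ v → G.Adj u v := fun h => @hf (f u) u rfl v h.symm
  have hne : G.Adj u v → u ≠ v := G.ne_of_adj
  tauto

end SimpleGraph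

theorem isProperColorLineGraph_iff_exists_coloring {α : Type} (G : SimpleGraph α) :
    IsProperColorLineGraph G ↔ ∃ (C : Type) (f : α → C),
      (∀ c, G.IsClique (f ⁻¹' {c})) ∧ IsLineGraph (G.deleteEdges (monochromaticPairs f)) := by
  constructor
  · rintro ⟨V, C, _, H, φ, hφ, ⟨ψ⟩⟩
    refine ⟨C, φ ∘ ψ, fun c u hu v hv huv => ?_, V, ‹_›, H, ⟨?_⟩⟩
    · exact ψ.map_adj_iff.mp ⟨ψ.injective.ne huv, Or.inr (hu.trans hv.symm)⟩
    · rw [monochromaticPairs_comp, ← colorLineGraph_deleteEdges_monochromaticPairs hφ]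
      exact ψ.deleteEdges _
  · rintro ⟨C, f, hf, V, _, H, ⟨ψ⟩⟩
    refine ⟨V, C, ‹_›, H, f ∘ ψ.symm, ?_, ⟨⟨ψ.toEquiv, ?_⟩⟩⟩
    · refine isProperEdgeColoring_iff.mpr fun e e' he => ?_
      simpa using (deleteEdges_adj.mp (ψ.symm.map_adj_iff.mpr he)).2
    · intro u v
      rw [adj_iff_deleteEdges_monochromaticPairs_adj_or hf, ← ψ.map_adj_iff]
      simp [colorLineGraph_adj_iff, ψ.injective.ne_iff]

theorem properColorLine_iff_cliquePartition_general {α : Type} (G : SimpleGraph α) :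
    IsProperColorLineGraph G ↔
      ∃ 𝒞 : Set (Set α),
        (∀ Q ∈ 𝒞, G.IsClique Q) ∧
        (∀ v : α, ∃! Q, Q ∈ 𝒞 ∧ v ∈ Q) ∧
        IsLineGraph (G.deleteEdges {e : Sym2 α | ∃ Q ∈ 𝒞, ∀ x ∈ e, x ∈ Q}) := by
  simp only [isProperColorLineGraph_iff_exists_coloring, forall_existsUnique_iff]
  constructor
  · rintro ⟨C, f, hf, hline⟩
    have hpart := mem_range_preimage_singleton_and_mem_iff f
    refine ⟨_, ?_, ⟨_, hpart _ _⟩, ?_⟩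
    · rintro _ ⟨w, rfl⟩
      exact hf (f w)
    · rwa [setOf_exists_mem_forall_mem_eq_monochromaticPairs (hpart _ _),
        monochromaticPairs_preimage_singleton]
  · rintro ⟨𝒞, h𝒞, ⟨part, hpart⟩, hline⟩
    rw [setOf_exists_mem_forall_mem_eq_monochromaticPairs hpart] at hline
    exact ⟨Set α, part, isClique_preimage_singleton_of_forall_isClique hpart h𝒞, hline⟩

/-- A graph is a proper color-line graph iff its vertex set has a partition into cliques
such that deleting all edges inside the parts leaves a line graph. -/
theorem properColorLine_iff_cliquePartition {α : Type} [Fintype α] (G : SimpleGraph α) :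
    IsProperColorLineGraph G ↔
      ∃ 𝒞 : Set (Set α),
        (∀ Q ∈ 𝒞, G.IsClique Q) ∧
        (∀ v : α, ∃! Q, Q ∈ 𝒞 ∧ v ∈ Q) ∧
        IsLineGraph (G.deleteEdges {e : Sym2 α | ∃ Q ∈ 𝒞, ∀ x ∈ e, x ∈ Q}) :=
  properColorLine_iff_cliquePartition_general G
end

section
/- For every integer k ≥ 1 and every finite simple graph G: G is a proper k-color-line graph if and only if the graph G + K1, obtained from G by adding one new isolated vertex, is a proper (k+1)-color-line graph. -/
open SimpleGraph

/-!
If `CL(H, φ) ≅ G`, adding to `H` a disjoint edge with a fresh color adds to the color-line graph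
a vertex adjacent to nothing. Conversely, in `CL(H, φ) ≅ G + K₁` the isolated vertex is an edge
`e₀` whose color no other edge uses; deleting `e₀` from `H` and closing the gap it leaves in the
palette `Fin (k + 1)` gives a proper `k`-coloring whose color-line graph is `G`. Both directions
rest on one observation: a copy of `H` in `H'` whose colorings agree up to an injection of
palettes embeds `CL(H)` into `CL(H')` as the induced subgraph on the image edges.
-/

open Function

namespace SimpleGraph

variable {α β γ : Type*}

noncomputable def Embedding.isoOfRangeEq {A : SimpleGraph α} {B : SimpleGraph β}
    {Γ : SimpleGraph γ} (ε₁ : A ↪g Γ) (ε₂ : B ↪g Γ) (h : Set.range ε₁ = Set.range ε₂) :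
    A ≃g B where
  toEquiv := (Equiv.ofInjective ε₁ ε₁.injective).trans
    ((Equiv.setCongr h).trans (Equiv.ofInjective ε₂ ε₂.injective).symm)
  map_rel_iff' {a a'} := by
    rw [← ε₂.map_rel_iff]
    simp only [Equiv.trans_apply, Equiv.apply_ofInjective_symm, Equiv.setCongr_apply,
      Equiv.ofInjective_apply, ε₁.map_rel_iff]

theorem nonempty_iso_map_some_iff {G : SimpleGraph α} {Γ : SimpleGraph β} :
    Nonempty (G.map (Function.Embedding.some : α ↪ Option α) ≃g Γ) ↔
      ∃ b₀, (∀ b, ¬Γ.Adj b₀ b) ∧ ∃ ε : G ↪g Γ, Set.range ε = {b₀}ᶜ := by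
  constructor
  · rintro ⟨ψ⟩
    refine ⟨ψ none, fun b hb => ?_, ψ.toEmbedding.comp (Embedding.map _ G), ?_⟩
    · simpa [map_adj'] using ψ.symm.map_rel_iff.2 hb
    · ext b
      obtain ⟨o, rfl⟩ := ψ.surjective b
      cases o <;> simp [ψ.injective.eq_iff]
  · rintro ⟨b₀, hb₀, ε, hε⟩
    have hne : ∀ a, ε a ≠ b₀ := fun a => by simpa [hε] using Set.mem_range_self (f := ε) a
    have hbij : Bijective (fun o : Option α => o.elim b₀ ε) := by
      refine ⟨?_, fun b => ?_⟩
      · rintro (_ | a) (_ | a') h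
        · rfl
        · exact absurd h.symm (hne a')
        · exact absurd h (hne a)
        · exact congrArg some (ε.injective h)
      · by_cases hb : b = b₀
        · exact ⟨none, hb.symm⟩
        · obtain ⟨a, rfl⟩ : b ∈ Set.range ε := hε ▸ hb
          exact ⟨some a, rfl⟩
    refine ⟨⟨Equiv.ofBijective _ hbij, ?_⟩⟩
    rintro (_ | a) (_ | a') <;> simp [map_adj', hb₀, fun b => (hb₀ b).imp Adj.symm]
    exact fun h => h.ne

theorem _root_.Sym2.exists_mem_map_and_mem_map_iff {f : α → β} (hf : Injective f)
    {e e' : Sym2 α} :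
    (∃ v, v ∈ e.map f ∧ v ∈ e'.map f) ↔ ∃ v, v ∈ e ∧ v ∈ e' := by
  simp only [Sym2.mem_map]
  constructor
  · rintro ⟨_, ⟨v, hv, rfl⟩, ⟨w, hw, hwv⟩⟩
    exact ⟨v, hv, hf hwv ▸ hw⟩
  · rintro ⟨v, hv, hv'⟩
    exact ⟨f v, ⟨v, hv, rfl⟩, ⟨v, hv', rfl⟩⟩

section ColorLineGraph

variable {V V' C C' : Type*} {H : SimpleGraph V} {H' : SimpleGraph V'}
  {φ : H.edgeSet → C} {φ' : H'.edgeSet → C'}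

theorem Copy.exists_mem_mapEdgeSet_iff (f : Copy H H') {e e' : H.edgeSet} :
    (∃ v, v ∈ (f.mapEdgeSet e : Sym2 V') ∧ v ∈ (f.mapEdgeSet e' : Sym2 V')) ↔
      ∃ v, v ∈ (e : Sym2 V) ∧ v ∈ (e' : Sym2 V) :=
  Sym2.exists_mem_map_and_mem_map_iff (f := f) f.injective

def Copy.colorLineGraphEmbedding (f : Copy H H') (g : C ↪ C')
    (hφ : ∀ e, φ' (f.mapEdgeSet e) = g (φ e)) :
    colorLineGraph H φ ↪g colorLineGraph H' φ' where
  toEmbedding := f.mapEdgeSet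
  map_rel_iff' {e e'} := by
    simp only [colorLineGraph, hφ, g.injective.eq_iff, f.mapEdgeSet.injective.ne_iff,
      f.exists_mem_mapEdgeSet_iff]

theorem IsProperEdgeColoring.of_copy (f : Copy H H') (g : C ↪ C')
    (hφ : ∀ e, φ' (f.mapEdgeSet e) = g (φ e)) (h' : IsProperEdgeColoring H' φ') :
    IsProperEdgeColoring H φ := by
  intro e e' hne hshare hc
  exact h' _ _ (f.mapEdgeSet.injective.ne hne) (f.exists_mem_mapEdgeSet_iff.2 hshare)
    (by rw [hφ, hφ, hc])

end ColorLineGraph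

section FreshEdge

variable {V : Type*} {H : SimpleGraph V} {k : ℕ}

def freshEdgeColoring (φ : H.edgeSet → Fin k) :
    (H ⊕g (⊤ : SimpleGraph Bool)).edgeSet → Fin (k + 1) :=
  Sum.elim (Fin.castSucc ∘ φ) (fun _ => Fin.last k) ∘ edgeSetSumEquiv

def freshEdge : (H ⊕g (⊤ : SimpleGraph Bool)).edgeSet :=
  ⟨s(.inr true, .inr false), by simp⟩

theorem freshEdgeColoring_mapEdgeSet_sumInl (φ : H.edgeSet → Fin k) (e : H.edgeSet) :
    freshEdgeColoring φ (Embedding.sumInl.toCopy.mapEdgeSet e) = (φ e).castSucc := by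
  obtain ⟨⟨u, v⟩, h⟩ := e
  rfl

theorem inr_notMem_mapEdgeSet_sumInl (f : H.edgeSet) (b : Bool) :
    .inr b ∉ (Embedding.sumInl (H := (⊤ : SimpleGraph Bool)).toCopy.mapEdgeSet f :
      Sym2 (V ⊕ Bool)) := by
  obtain ⟨⟨u, v⟩, h⟩ := f
  simp [Copy.mapEdgeSet]

theorem range_mapEdgeSet_sumInl :
    Set.range (Embedding.sumInl (G := H) (H := (⊤ : SimpleGraph Bool))).toCopy.mapEdgeSet =
      {freshEdge}ᶜ := by
  ext ⟨e, he⟩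
  induction e with
  | _ u v =>
    rcases u with u | u <;> rcases v with v | v
    · refine iff_of_true ⟨⟨s(u, v), by simpa using he⟩, rfl⟩ ?_
      simp [freshEdge]
    · simp at he
    · simp at he
    · have hne : ¬ ∃ e, Embedding.sumInl.toCopy.mapEdgeSet e = ⟨s(.inr u, .inr v), he⟩ := by
        rintro ⟨e, h⟩
        exact inr_notMem_mapEdgeSet_sumInl e u (h ▸ Sym2.mem_mk_left _ _)
      have huv : u ≠ v := by simpa using he
      simp only [Set.mem_range, hne, false_iff, Set.mem_compl_singleton_iff, not_not, freshEdge,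
        Subtype.mk.injEq]
      cases u <;> cases v <;> simp_all [Sym2.eq_swap]

theorem exists_mapEdgeSet_sumInl_eq {e : (H ⊕g (⊤ : SimpleGraph Bool)).edgeSet}
    (he : e ≠ freshEdge) : ∃ f, Embedding.sumInl.toCopy.mapEdgeSet f = e := by
  rwa [← Set.mem_range, range_mapEdgeSet_sumInl]

theorem freshEdge_not_adj (φ : H.edgeSet → Fin k) (e : (H ⊕g (⊤ : SimpleGraph Bool)).edgeSet) :
    ¬(colorLineGraph _ (freshEdgeColoring φ)).Adj freshEdge e := by
  rintro ⟨hne, hshare | hc⟩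
  all_goals obtain ⟨f, rfl⟩ := exists_mapEdgeSet_sumInl_eq hne.symm
  · simp [freshEdge, inr_notMem_mapEdgeSet_sumInl] at hshare
  · rw [freshEdgeColoring_mapEdgeSet_sumInl] at hc
    exact (Fin.castSucc_lt_last _).ne' hc

theorem IsProperEdgeColoring.freshEdgeColoring {φ : H.edgeSet → Fin k}
    (hφ : IsProperEdgeColoring H φ) : IsProperEdgeColoring _ (freshEdgeColoring φ) := by
  intro e e' hne hshare hc
  rcases eq_or_ne e freshEdge with rfl | he
  · exact freshEdge_not_adj φ e' ⟨hne, .inr hc⟩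
  rcases eq_or_ne e' freshEdge with rfl | he'
  · exact freshEdge_not_adj φ e ⟨hne.symm, .inr hc.symm⟩
  obtain ⟨f, rfl⟩ := exists_mapEdgeSet_sumInl_eq he
  obtain ⟨f', rfl⟩ := exists_mapEdgeSet_sumInl_eq he'
  rw [freshEdgeColoring_mapEdgeSet_sumInl, freshEdgeColoring_mapEdgeSet_sumInl] at hc
  exact hφ f f' (ne_of_apply_ne _ hne) (Copy.exists_mem_mapEdgeSet_iff _ |>.1 hshare)
    (Fin.castSucc_injective _ hc)

end FreshEdge

theorem range_mapEdgeSet_ofLE_deleteEdges {V : Type*} {H : SimpleGraph V} (e₀ : H.edgeSet) :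
    Set.range (Copy.ofLE _ _ (H.deleteEdges_le {e₀.1})).mapEdgeSet = {e₀}ᶜ := by
  ext ⟨e, he⟩
  simp [Copy.mapEdgeSet, Subtype.ext_iff, he]

variable {k : ℕ} {G : SimpleGraph α}

theorem IsProperKColorLineGraph.map_some (h : IsProperKColorLineGraph k G) :
    IsProperKColorLineGraph (k + 1) (G.map (Function.Embedding.some : α ↪ Option α)) := by
  obtain ⟨V, _, H, φ, hφ, ⟨ψ⟩⟩ := h
  let ι := Embedding.sumInl (G := H) (H := (⊤ : SimpleGraph Bool)).toCopy
  let ε := (ι.colorLineGraphEmbedding Fin.castSuccEmb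
    (freshEdgeColoring_mapEdgeSet_sumInl φ)).comp ψ.toEmbedding
  refine ⟨V ⊕ Bool, inferInstance, _, freshEdgeColoring φ, hφ.freshEdgeColoring,
    nonempty_iso_map_some_iff.2 ⟨freshEdge, freshEdge_not_adj φ, ε, ?_⟩⟩
  exact (ψ.surjective.range_comp _).trans range_mapEdgeSet_sumInl

theorem IsProperKColorLineGraph.of_map_some
    (h : IsProperKColorLineGraph (k + 1) (G.map (Function.Embedding.some : α ↪ Option α))) :
    IsProperKColorLineGraph k G := by
  obtain ⟨V, hV, H, φ', hφ', hψ⟩ := h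
  obtain ⟨e₀, h₀, ε, hε⟩ := nonempty_iso_map_some_iff.1 hψ
  let ι := Copy.ofLE _ _ (H.deleteEdges_le {e₀.1})
  have hι := range_mapEdgeSet_ofLE_deleteEdges e₀
  have hne : ∀ e, ι.mapEdgeSet e ≠ e₀ := fun e =>
    Set.mem_compl_singleton_iff.1 (hι ▸ Set.mem_range_self e)
  -- an edge with the color of the isolated edge `e₀` would be adjacent to it
  have hcolor : ∀ e, ∃ c, φ' (ι.mapEdgeSet e) = (φ' e₀).succAboveEmb c := fun e =>
    (Fin.exists_succAbove_eq fun hc => h₀ _ ⟨(hne e).symm, .inr hc.symm⟩).imp fun _ => Eq.symm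
  choose φ hφ using hcolor
  exact ⟨V, hV, _, φ, hφ'.of_copy ι _ hφ,
    ⟨ε.isoOfRangeEq (ι.colorLineGraphEmbedding _ hφ) (hε.trans hι.symm)⟩⟩

end SimpleGraph

theorem properKColorLine_iff_addIsolated_general {α : Type} (k : ℕ)
    (G : SimpleGraph α) :
    IsProperKColorLineGraph k G ↔
      IsProperKColorLineGraph (k + 1) (G.map (Function.Embedding.some : α ↪ Option α)) :=
  ⟨.map_some, .of_map_some⟩

/-- `G` is a proper `k`-color-line graph iff `G + K₁` (adding one isolated vertex)
is a proper `(k+1)`-color-line graph. -/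
theorem properKColorLine_iff_addIsolated {α : Type} [Fintype α] (k : ℕ) (hk : 1 ≤ k)
    (G : SimpleGraph α) :
    IsProperKColorLineGraph k G ↔
      IsProperKColorLineGraph (k + 1) (G.map (Function.Embedding.some : α ↪ Option α)) :=
  properKColorLine_iff_addIsolated_general k G
end
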